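/- arXiv:2309.05304 — 7 statements merged into one kernel-verified Lean document; each statement's English description precedes it below -/
import Mathlib

section
/- In the category of partially ordered sets and monotone maps, the canonical map from the coproduct ∐_{n<ω} n of all finite ordinals to the ordinal ω is a local retraction but not a split epimorphism. -/
/-- The canonical monotone map from the coproduct `∐_{n<ω} n` of all finite
ordinals (the disjoint union `Σ n, Fin n` with the disjoint-sum order) to the
ordinal `ω` (the poset `ℕ`), sending the element `i` of the ordinal `n` to `i`. -/
def canonicalMap : (Σ n : ℕ, Fin n) → ℕ := fun x => (x.2 : ℕ)

/-- In `Pos`, the canonical map `∐_{n<ω} n → ω` is a local retraction (every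
monotone map from a finite poset into `ω` lifts through it) but not a split
epimorphism (it admits no monotone section). -/
theorem canonicalMap_localRetraction_not_splitEpi :
    (∀ (Γ : Type) (_ : Fintype Γ) (_ : PartialOrder Γ) (f : Γ → ℕ), Monotone f →
      ∃ g : Γ → Σ n : ℕ, Fin n, Monotone g ∧ canonicalMap ∘ g = f) ∧
    ¬ ∃ s : ℕ → Σ n : ℕ, Fin n, Monotone s ∧ canonicalMap ∘ s = id := by
  constructor
  · intro Γ _ _ f hf
    set N : ℕ := Finset.univ.sup f + 1 with hN
    have hb : ∀ x : Γ, f x < N := fun x =>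
      Nat.lt_succ_of_le (Finset.le_sup (Finset.mem_univ x))
    refine ⟨fun x => ⟨N, ⟨f x, hb x⟩⟩, ?_, ?_⟩
    · intro a b hab
      exact Sigma.le_def.mpr ⟨rfl, hf hab⟩
    · funext x; rfl
  · rintro ⟨s, hmono, hsec⟩
    have hfst : ∀ n, (s n).1 = (s 0).1 := by
      intro n
      induction n with
      | zero => rfl
      | succ k ih =>
        obtain ⟨h, _⟩ := Sigma.le_def.mp (hmono (Nat.le_succ k))
        rw [← h, ih]
    have h1 : canonicalMap (s ((s 0).1)) = (s 0).1 := congrFun hsec _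
    have h2 : ((s ((s 0).1)).2 : ℕ) < (s ((s 0).1)).1 := (s ((s 0).1)).2.isLt
    have h3 := hfst ((s 0).1)
    simp only [canonicalMap] at h1
    omega
end

section
/- Let End be the category of sets equipped with an endomorphism. Regarding ℕ and ℤ as objects of End via the successor maps, the projection ℤ × ℕ → ℤ is a local retraction in End but not a split epimorphism. -/
open CategoryTheory CategoryTheory.Limits Opposite

/-!
`ℤ` is the colimit in `End` of the chain `ℕ → ℕ → ℕ → ⋯` of successor maps, the `n`-th copy of
`ℕ` sitting in `ℤ` as `k ↦ k - n`. A morphism out of a finitely presentable object into `ℤ`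
therefore factors through some copy of `ℕ`, and that copy lifts to `ℤ × ℕ` as `k ↦ (k - n, k)`.
A section of the projection would give, through the second coordinate, an equivariant map
`ℤ → ℕ`, which cannot exist since `ℕ` has no infinite backward orbit of the successor.
-/

/-- The category `End` of sets equipped with an endomorphism. -/
structure EndObj : Type 1 where
  carrier : Type
  endo : carrier → carrier

instance : CategoryStruct EndObj where
  Hom A B := { f : A.carrier → B.carrier // B.endo ∘ f = f ∘ A.endo }
  id A := ⟨id, rfl⟩
  comp f g := ⟨g.1 ∘ f.1, by
    funext x
    have hg := congrFun g.2
    have hf := congrFun f.2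
    simp only [Function.comp_apply] at hg hf ⊢
    rw [hg, hf]⟩

instance : Category EndObj where
  id_comp f := rfl
  comp_id f := rfl
  assoc f g h := rfl

/-- An object is finitely presentable if its covariant hom-functor preserves
small filtered colimits. -/
def IsFinitelyPresentable (Γ : EndObj) : Prop :=
  ∀ (J : Type) (_ : SmallCategory J) (_ : IsFiltered J),
    Nonempty (PreservesColimitsOfShape J (coyoneda.obj (op Γ)))

/-- A morphism is a local retraction if every morphism from a finitely
presentable object into its codomain lifts through it. -/
def LocalRetraction {X Y : EndObj} (p : X ⟶ Y) : Prop :=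
  ∀ (Γ : EndObj), _root_.IsFinitelyPresentable Γ → ∀ f : Γ ⟶ Y, ∃ g : Γ ⟶ X, g ≫ p = f

/-- `ℕ` with successor as an object of `End`. -/
def NatObj : EndObj := ⟨ℕ, fun n => n + 1⟩

/-- `ℤ` with successor as an object of `End`. -/
def IntObj : EndObj := ⟨ℤ, fun z => z + 1⟩

/-- `ℤ × ℕ` with the componentwise successor. -/
def ProdObj : EndObj := ⟨ℤ × ℕ, fun x => (x.1 + 1, x.2 + 1)⟩

/-- The projection `ℤ × ℕ → ℤ` in `End`. -/
def proj : ProdObj ⟶ IntObj := ⟨Prod.fst, rfl⟩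

lemma EndObj.hom_ext {A B : EndObj} {f g : A ⟶ B} (h : ∀ x, f.1 x = g.1 x) : f = g :=
  Subtype.ext (funext h)

lemma EndObj.hom_comm {A B : EndObj} (f : A ⟶ B) (x : A.carrier) :
    B.endo (f.1 x) = f.1 (A.endo x) :=
  congrFun f.2 x

lemma LocalRetraction.of_isColimit {J : Type} [SmallCategory J] [IsFiltered J]
    {F : J ⥤ EndObj} {c : Cocone F} (hc : IsColimit c) {X : EndObj} {p : X ⟶ c.pt}
    (hlift : ∀ j, ∃ g : F.obj j ⟶ X, g ≫ p = c.ι.app j) : LocalRetraction p := by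
  intro Γ hΓ f
  have := (hΓ J inferInstance inferInstance).some
  obtain ⟨j, g, hg⟩ := Types.jointly_surjective _
    (isColimitOfPreserves (coyoneda.obj (op Γ)) hc) f
  obtain ⟨l, hl⟩ := hlift j
  exact ⟨g ≫ l, by rw [Category.assoc, hl]; exact hg⟩

def succChain : ℕ ⥤ EndObj where
  obj _ := NatObj
  map {n m} _ := ⟨fun k : ℕ => (k + (m - n) : ℕ), by
    funext (k : ℕ)
    show k + (m - n) + 1 = k + 1 + (m - n)
    omega⟩
  map_id n := EndObj.hom_ext fun (k : ℕ) => by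
    show k + (n - n) = k
    omega
  map_comp {n m l} f g := EndObj.hom_ext fun (k : ℕ) => by
    have := leOfHom f
    have := leOfHom g
    show k + (l - n) = k + (m - n) + (l - m)
    omega

def succChainCocone : Cocone succChain where
  pt := IntObj
  ι :=
    { app n := ⟨fun k : ℕ => (k - n : ℤ), by
        funext (k : ℕ)
        show (k - n : ℤ) + 1 = ((k + 1 : ℕ) : ℤ) - n
        push_cast
        ring⟩
      naturality {n m} f := EndObj.hom_ext fun (k : ℕ) => by
        have := leOfHom f
        show ((k + (m - n) : ℕ) : ℤ) - m = (k : ℤ) - n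
        omega }

lemma succChain_cocone_app_eq_of_sub_eq (s : Cocone succChain) {a b ka kb : ℕ}
    (h : (ka : ℤ) - a = kb - b) : (s.ι.app a).1 ka = (s.ι.app b).1 kb := by
  have hw (n : ℕ) (hn : n ≤ max a b) (k : ℕ) :
      (s.ι.app (max a b)).1 (k + (max a b - n)) = (s.ι.app n).1 k :=
    congrFun (congrArg Subtype.val (s.w (homOfLE hn))) k
  rw [← hw a (le_max_left a b), ← hw b (le_max_right a b)]
  exact congrArg (s.ι.app (max a b)).1 (show ka + (max a b - a) = kb + (max a b - b) by omega)

def succChainCoconeIsColimit : IsColimit succChainCocone where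
  desc s := ⟨fun z : ℤ => (s.ι.app (-z).toNat).1 z.toNat, by
    funext (z : ℤ)
    show s.pt.endo ((s.ι.app (-z).toNat).1 z.toNat)
      = (s.ι.app (-(z + 1)).toNat).1 (z + 1).toNat
    exact (EndObj.hom_comm _ _).trans
      (succChain_cocone_app_eq_of_sub_eq s (ka := z.toNat + 1) (by omega))⟩
  fac s n := EndObj.hom_ext fun (k : ℕ) => by
    show (s.ι.app (-((k : ℤ) - n)).toNat).1 ((k : ℤ) - n).toNat = (s.ι.app n).1 k
    exact succChain_cocone_app_eq_of_sub_eq s (by omega)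
  uniq s u hu := EndObj.hom_ext fun (z : ℤ) => by
    have hz : (z.toNat : ℤ) - ((-z).toNat : ℕ) = z := by omega
    have := congrFun (congrArg Subtype.val (hu (-z).toNat)) z.toNat
    simp only [succChainCocone] at this
    rw [← this]
    exact congrArg u.1 hz.symm

lemma not_forall_apply_add_one_eq (g : ℤ → ℕ) : ¬ ∀ z, g (z + 1) = g z + 1 := by
  intro hg
  have hadd (k : ℕ) (z : ℤ) : g (z + k) = g z + k := by
    induction k with
    | zero => simp
    | succ k ih => rw [Nat.cast_succ, ← add_assoc, hg, ih, add_assoc]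
  have := hadd (g 0 + 1) (-(g 0 : ℤ) - 1)
  rw [show -(g 0 : ℤ) - 1 + ((g 0 + 1 : ℕ) : ℤ) = 0 by push_cast; ring] at this
  omega

lemma isEmpty_hom_IntObj_NatObj : IsEmpty (IntObj ⟶ NatObj) :=
  ⟨fun g => not_forall_apply_add_one_eq g.1 fun z => (EndObj.hom_comm g z).symm⟩

/-- The projection `ℤ × ℕ → ℤ` is a local retraction in `End` but not a split
epimorphism. -/
theorem proj_localRetraction_not_splitEpi :
    LocalRetraction proj ∧ ¬ IsSplitEpi proj := by
  constructor
  · refine LocalRetraction.of_isColimit succChainCoconeIsColimit fun n => ?_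
    refine ⟨⟨fun k : ℕ => ((k - n : ℤ), k), ?_⟩, rfl⟩
    funext (k : ℕ)
    show ((k - n : ℤ) + 1, k + 1) = ((((k + 1 : ℕ) : ℤ) - n : ℤ), k + 1)
    push_cast
    ring_nf
  · rintro ⟨⟨s, -⟩⟩
    exact isEmpty_hom_IntObj_NatObj.false (s ≫ ⟨Prod.snd, rfl⟩)
end

section
/- For a set S, the poset of strongly connected components of the S-indexed product category Set^S is isomorphic to the power set of S ordered by inclusion. Consequently, Set^S satisfies the ascending chain condition on strongly connected components if and only if S is finite. -/
open CategoryTheory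

universe v u v' u'

/-- Two objects are strongly connected if there are morphisms in both directions. -/
def StronglyConnected {C : Type u} [Category.{v} C] (X Y : C) : Prop :=
  Nonempty (X ⟶ Y) ∧ Nonempty (Y ⟶ X)

/-- Strong connectedness is an equivalence relation on objects. -/
def sccSetoid (C : Type u) [Category.{v} C] : Setoid C where
  r := StronglyConnected
  iseqv := by
    refine ⟨fun X => ⟨⟨𝟙 X⟩, ⟨𝟙 X⟩⟩, fun h => ⟨h.2, h.1⟩, fun h h' => ?_⟩
    exact ⟨⟨h.1.some ≫ h'.1.some⟩, ⟨h'.2.some ≫ h.2.some⟩⟩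

/-- The strongly connected components of a category. -/
def SCC (C : Type u) [Category.{v} C] : Type u := Quotient (sccSetoid C)

/-- The class of an object in the poset of strongly connected components. -/
def SCC.mk {C : Type u} [Category.{v} C] (X : C) : SCC C := Quotient.mk (sccSetoid C) X

instance (C : Type u) [Category.{v} C] : PartialOrder (SCC C) where
  le := Quotient.lift₂ (fun X Y => Nonempty (X ⟶ Y)) (by
    rintro X Y X' Y' ⟨⟨xx'⟩, ⟨x'x⟩⟩ ⟨⟨yy'⟩, ⟨y'y⟩⟩
    exact propext ⟨fun ⟨f⟩ => ⟨x'x ≫ f ≫ yy'⟩, fun ⟨f⟩ => ⟨xx' ≫ f ≫ y'y⟩⟩)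
  le_refl := by rintro ⟨X⟩; exact ⟨𝟙 X⟩
  le_trans := by rintro ⟨X⟩ ⟨Y⟩ ⟨Z⟩ ⟨f⟩ ⟨g⟩; exact ⟨f ≫ g⟩
  le_antisymm := by rintro ⟨X⟩ ⟨Y⟩ ⟨f⟩ ⟨g⟩; exact Quotient.sound ⟨⟨f⟩, ⟨g⟩⟩

/-- The map induced on strongly connected components by a functor. -/
def sccMap {C : Type u} [Category.{v} C] {D : Type u'} [Category.{v'} D] (F : C ⥤ D) :
    SCC C → SCC D :=
  Quotient.map' F.obj (by
    rintro X Y ⟨⟨f⟩, ⟨g⟩⟩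
    exact ⟨⟨F.map f⟩, ⟨F.map g⟩⟩)

/-! A family `F : S → Type` maps to `G` exactly when `G s` is inhabited wherever `F s` is, so
objects of `Set^S` are classified up to strong connectedness by their supports. Hence
`SCC (S → Type)` is the power set of `S`, which is finite — and so has no strictly ascending
chain — iff `S` is; for infinite `S` the images of the initial segments of `ℕ` under an
embedding `ℕ ↪ S` form such a chain. -/

lemma SCC.mk_le_mk_iff {C : Type*} [Category C] (X Y : C) :
    SCC.mk X ≤ SCC.mk Y ↔ Nonempty (X ⟶ Y) :=
  Iff.rfl

lemma OrderIso.exists_strictMono_nat_iff {α β : Type*} [Preorder α] [Preorder β]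
    (e : α ≃o β) : (∃ f : ℕ → α, StrictMono f) ↔ ∃ g : ℕ → β, StrictMono g :=
  ⟨fun ⟨f, hf⟩ => ⟨e ∘ f, e.strictMono.comp hf⟩,
    fun ⟨g, hg⟩ => ⟨e.symm ∘ g, e.symm.strictMono.comp hg⟩⟩

lemma Set.exists_strictMono_nat_iff_infinite (S : Type*) :
    (∃ f : ℕ → Set S, StrictMono f) ↔ _root_.Infinite S := by
  constructor
  · rintro ⟨f, hf⟩
    by_contra hfin
    have : Finite S := not_infinite_iff_finite.mp hfin
    exact not_strictMono_of_wellFoundedGT f hf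
  · intro
    let e := _root_.Infinite.natEmbedding S
    exact ⟨fun n => e '' Set.Iio n,
      e.injective.image_strictMono.comp fun _ _ hmn => Set.Iio_ssubset_Iio hmn⟩

namespace TypeFamily

variable {S : Type*}

def inhabitedSupport (F : S → Type u) : Set S := {s | Nonempty (F s)}

lemma nonempty_hom_iff_inhabitedSupport_subset (F G : S → Type u) :
    Nonempty (F ⟶ G) ↔ inhabitedSupport F ⊆ inhabitedSupport G :=
  ⟨fun ⟨f⟩ s ⟨x⟩ => ⟨f s x⟩,
    fun h => ⟨fun _ => TypeCat.ofHom fun x => (h ⟨x⟩).some⟩⟩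

lemma stronglyConnected_iff_inhabitedSupport_eq (F G : S → Type u) :
    StronglyConnected F G ↔ inhabitedSupport F = inhabitedSupport G := by
  rw [StronglyConnected, nonempty_hom_iff_inhabitedSupport_subset,
    nonempty_hom_iff_inhabitedSupport_subset, Set.Subset.antisymm_iff]

lemma inhabitedSupport_plift_mem (A : Set S) :
    inhabitedSupport (fun s => PLift (s ∈ A)) = A :=
  Set.ext fun _ => ⟨fun ⟨p⟩ => p.down, fun h => ⟨⟨h⟩⟩⟩

variable (S) in
noncomputable def sccOrderIsoSet : SCC (S → Type) ≃o Set S where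
  toFun := Quotient.lift inhabitedSupport fun F G =>
    (stronglyConnected_iff_inhabitedSupport_eq F G).1
  invFun A := SCC.mk fun s => PLift (s ∈ A)
  left_inv := by
    rintro ⟨F⟩
    exact Quotient.sound
      ((stronglyConnected_iff_inhabitedSupport_eq _ F).2 (inhabitedSupport_plift_mem _))
  right_inv := inhabitedSupport_plift_mem
  map_rel_iff' := by
    rintro ⟨F⟩ ⟨G⟩
    exact ((SCC.mk_le_mk_iff F G).trans (nonempty_hom_iff_inhabitedSupport_subset F G)).symm

end TypeFamily

/-- For a set `S`, the poset of strongly connected components of `Set^S` is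
isomorphic to the power set of `S`; consequently `Set^S` satisfies the
ascending chain condition iff `S` is finite. -/
theorem scc_pi_type (S : Type) :
    Nonempty (SCC (S → Type) ≃o Set S) ∧
    ((¬ ∃ f : ℕ → SCC (S → Type), StrictMono f) ↔ Finite S) := by
  refine ⟨⟨TypeFamily.sccOrderIsoSet S⟩, ?_⟩
  rw [(TypeFamily.sccOrderIsoSet S).exists_strictMono_nat_iff,
    Set.exists_strictMono_nat_iff_infinite, not_infinite_iff_finite]
end

section
/- For a nonempty set S, the strongly connected components of the coslice category S/Set (sets with S-indexed constants) are in bijective correspondence with the equivalence relations (set partitions) on S: two objects are strongly connected if and only if their constant assignments induce the same partition of S (i.e., merge the same pairs of indices). -/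
/-- For a nonempty set `S`, two objects of the coslice category `S/Set`
(sets with `S`-indexed constants) are strongly connected (admit morphisms in
both directions) if and only if their constant assignments induce the same
partition of `S`, i.e. merge the same pairs of indices.  This sets up the
bijective correspondence between strongly connected components of `S/Set` and
equivalence relations on `S`. -/
theorem coslice_stronglyConnected_iff_same_partition
    (S : Type u) (hS : Nonempty S) (X Y : Type u) (cX : S → X) (cY : S → Y) :
    ((∃ f : X → Y, f ∘ cX = cY) ∧ (∃ g : Y → X, g ∘ cY = cX)) ↔
      (∀ s t : S, cX s = cX t ↔ cY s = cY t) := by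
  constructor
  · rintro ⟨⟨f, hf⟩, ⟨g, hg⟩⟩ s t
    constructor
    · intro h
      have := congrFun hf s
      have := congrFun hf t
      simp only [Function.comp] at *
      rw [← ‹f (cX s) = cY s›, ← ‹f (cX t) = cY t›, h]
    · intro h
      have := congrFun hg s
      have := congrFun hg t
      simp only [Function.comp] at *
      rw [← ‹g (cY s) = cX s›, ← ‹g (cY t) = cX t›, h]
  · intro h
    classical
    obtain ⟨s₀⟩ := hS
    constructor
    · refine ⟨fun x => if hx : ∃ s, cX s = x then cY hx.choose else cY s₀, ?_⟩
      funext s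
      simp only [Function.comp]
      have hx : ∃ t, cX t = cX s := ⟨s, rfl⟩
      rw [dif_pos hx]
      exact (h hx.choose s).mp hx.choose_spec
    · refine ⟨fun y => if hy : ∃ s, cY s = y then cX hy.choose else cX s₀, ?_⟩
      funext s
      simp only [Function.comp]
      have hy : ∃ t, cY t = cY s := ⟨s, rfl⟩
      rw [dif_pos hy]
      exact (h hy.choose s).mpr hy.choose_spec
end

section
/- Let S_n be the semigroup generated by x₀,…,x_n subject to the relations x_i = x_i x_j for all i > j. If α = αβ holds in S_n for elements α, β, then deg α > deg β, where deg(x₀^{a₀}⋯x_n^{a_n}) is the largest i with a_i ≠ 0. Consequently, any semigroup homomorphism S_n → S_m forces n ≤ m, so the category of semigroups fails the ascending chain condition on strongly connected components. -/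
/-- The semigroup `S n` generated by `x₀, …, x_n` subject to `x_i = x_i x_j`
for `i > j`, presented by normal forms: an element is a finitely supported
exponent vector `x₀^{a₀} x₁^{a₁} ⋯ x_n^{a_n}`, not all exponents zero. -/
def NF (n : ℕ) : Type :=
  { a : ℕ → ℕ // (∃ i, a i ≠ 0) ∧ ∀ i, n < i → a i = 0 }

/-- The degree of a normal form: the largest `i` with `a i ≠ 0`. -/
def NF.deg {n : ℕ} (a : NF n) : ℕ :=
  Nat.findGreatest (fun i => a.1 i ≠ 0) n

/-- Multiplication of normal forms: exponents of the second factor at indices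
below the degree of the first factor are absorbed. -/
instance (n : ℕ) : Mul (NF n) where
  mul a b := ⟨fun i => if i < a.deg then a.1 i else a.1 i + b.1 i, by
    constructor
    · obtain ⟨i, hi⟩ := a.2.1
      refine ⟨i, ?_⟩
      by_cases h : i < a.deg
      · simpa [h] using hi
      · simp only [if_neg h]
        omega
    · intro i hi
      have ha := a.2.2 i hi
      have hb := b.2.2 i hi
      have : ¬ i < a.deg := by
        have : a.deg ≤ n := Nat.findGreatest_le n
        omega
      simp [this, ha, hb]⟩

theorem NF.mul_val {n : ℕ} (a b : NF n) (i : ℕ) :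
    (a * b).1 i = if i < a.deg then a.1 i else a.1 i + b.1 i := rfl

theorem NF.deg_le {n : ℕ} (a : NF n) : a.deg ≤ n := Nat.findGreatest_le n

theorem NF.deg_spec {n : ℕ} (a : NF n) : a.1 a.deg ≠ 0 := by
  obtain ⟨i, hi⟩ := a.2.1
  have hin : i ≤ n := by
    by_contra h
    exact hi (a.2.2 i (by omega))
  unfold NF.deg
  exact Nat.findGreatest_spec (P := fun i => a.1 i ≠ 0) hin hi

theorem NF.eq_zero_of_deg_lt {n : ℕ} (a : NF n) {i : ℕ} (h : a.deg < i) :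
    a.1 i = 0 := by
  unfold NF.deg at h
  by_cases hin : i ≤ n
  · by_contra hne
    exact Nat.findGreatest_is_greatest (P := fun i => a.1 i ≠ 0) h hin hne
  · exact a.2.2 i (by omega)

theorem NF.deg_mul {n : ℕ} (a b : NF n) : (a * b).deg = max a.deg b.deg := by
  set M := max a.deg b.deg with hM
  have hMn : M ≤ n := max_le a.deg_le b.deg_le
  have hent : (a * b).1 M ≠ 0 := by
    rw [NF.mul_val]
    have hnlt : ¬ M < a.deg := by omega
    rw [if_neg hnlt]
    rcases le_total b.deg a.deg with h | h
    · have hMa : M = a.deg := by omega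
      have ha := a.deg_spec
      rw [hMa]
      omega
    · have hMb : M = b.deg := by omega
      have hb := b.deg_spec
      rw [hMb]
      omega
  have h1 : M ≤ (a * b).deg := by
    unfold NF.deg
    exact Nat.le_findGreatest hMn hent
  have h2 : (a * b).deg ≤ M := by
    by_contra h
    have hd := (a * b).deg_spec
    rw [NF.mul_val] at hd
    have ha : a.1 (a * b).deg = 0 := a.eq_zero_of_deg_lt (by omega)
    have hb : b.1 (a * b).deg = 0 := b.eq_zero_of_deg_lt (by omega)
    by_cases hlt : (a * b).deg < a.deg
    · omega
    · simp only [if_neg hlt, ha, hb] at hd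
      omega
  omega

instance (n : ℕ) : Semigroup (NF n) where
  mul_assoc a b c := by
    apply Subtype.ext
    funext i
    simp only [NF.mul_val, NF.deg_mul]
    by_cases h1 : i < a.deg
    · have : i < max a.deg b.deg := lt_of_lt_of_le h1 (le_max_left _ _)
      simp [h1, this]
    · by_cases h2 : i < b.deg
      · have : i < max a.deg b.deg := lt_of_lt_of_le h2 (le_max_right _ _)
        simp [h1, h2, this]
      · have : ¬ i < max a.deg b.deg := by
          simp only [not_lt, max_le_iff]
          omega
        simp [h1, h2, this]
        omega

/-!
If `α = α β` in `S n`, compare exponents at index `deg β`: were `deg β ≥ deg α`, the product would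
add `β`'s nonzero exponent there, so `deg β < deg α`. Since `x_i = x_i x_j` for `j < i`, any
homomorphism `f : S n → S m` sends `x₀, …, x_n` to elements of strictly increasing degree; these
are `n + 1` distinct degrees in `{0, …, m}`, whence `n ≤ m`.
-/

namespace NF

theorem deg_eq_of_ne_zero {n : ℕ} (a : NF n) {i : ℕ} (hi : a.1 i ≠ 0)
    (h_above : ∀ k, i < k → a.1 k = 0) : a.deg = i := by
  rcases lt_trichotomy a.deg i with h | h | h
  · exact absurd (a.eq_zero_of_deg_lt h) hi
  · exact h
  · exact absurd (h_above _ h) a.deg_spec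

theorem deg_lt_of_eq_mul {n : ℕ} {α β : NF n} (h : α = α * β) : β.deg < α.deg := by
  by_contra! hle
  have h_exp : α.1 β.deg = α.1 β.deg + β.1 β.deg := by
    conv_lhs => rw [h]
    rw [mul_val, if_neg hle.not_gt]
  exact β.deg_spec (by omega)

def gen (n : ℕ) (i : Fin (n + 1)) : NF n :=
  ⟨Pi.single (i : ℕ) 1, ⟨i, by simp⟩, fun k hk => Pi.single_eq_of_ne (by omega) _⟩

theorem deg_gen {n : ℕ} (i : Fin (n + 1)) : (gen n i).deg = i :=
  deg_eq_of_ne_zero _ (by simp [gen]) fun _ hk => Pi.single_eq_of_ne hk.ne' _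

theorem gen_mul_gen_of_lt {n : ℕ} {i j : Fin (n + 1)} (hji : j < i) :
    gen n i * gen n j = gen n i := by
  apply Subtype.ext
  funext k
  rw [mul_val, deg_gen]
  split_ifs with hk
  · rfl
  · have hkj : k ≠ j := by omega
    simp [gen, Pi.single_apply, hkj]

theorem strictMono_deg_map_gen {n m : ℕ} (f : NF n →ₙ* NF m) :
    StrictMono fun i => (f (gen n i)).deg := fun j i hji =>
  deg_lt_of_eq_mul (by rw [← map_mul, gen_mul_gen_of_lt hji])

theorem le_of_mulHom {n m : ℕ} (f : NF n →ₙ* NF m) : n ≤ m := by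
  let degFin : Fin (n + 1) → Fin (m + 1) := fun i => ⟨(f (gen n i)).deg, by
    have := (f (gen n i)).deg_le; omega⟩
  have h_inj : degFin.Injective := fun i j hij =>
    (strictMono_deg_map_gen f).injective (congrArg Fin.val hij)
  exact Nat.succ_le_succ_iff.mp (Fin.le_of_injective degFin h_inj)

def castLE {n m : ℕ} (h : n ≤ m) (a : NF n) : NF m :=
  ⟨a.1, a.2.1, fun i hi => a.2.2 i (by omega)⟩

theorem deg_castLE {n m : ℕ} (h : n ≤ m) (a : NF n) : (castLE h a).deg = a.deg :=
  deg_eq_of_ne_zero _ a.deg_spec fun _ hk => a.eq_zero_of_deg_lt hk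

def castLEHom {n m : ℕ} (h : n ≤ m) : NF n →ₙ* NF m where
  toFun := castLE h
  map_mul' a b := by
    apply Subtype.ext
    funext i
    simp only [mul_val, deg_castLE]
    rfl

end NF

/-- In `S n`, if `α = α β` then `deg α > deg β`; consequently every semigroup
homomorphism `S n → S m` forces `n ≤ m`, and since there are canonical
homomorphisms `S n → S (n+1)`, the category of semigroups fails the ascending
chain condition on strongly connected components. -/
theorem semigroup_chain_no_acc :
    (∀ (n : ℕ) (α β : NF n), α = α * β → β.deg < α.deg) ∧
    (∀ n : ℕ, Nonempty (NF n →ₙ* NF (n + 1))) ∧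
    (∀ n m : ℕ, Nonempty (NF n →ₙ* NF m) → n ≤ m) :=
  ⟨fun _ _ _ => NF.deg_lt_of_eq_mul, fun n => ⟨NF.castLEHom n.le_succ⟩,
    fun _ _ ⟨f⟩ => NF.le_of_mulHom f⟩
end

section
/- For any category 𝒜, the free coproduct cocompletion Fam(𝒜) has poset of strongly connected components isomorphic to the poset of essentially small lower classes of σ(𝒜) ordered by inclusion: σ(Fam(𝒜)) ≅ 𝔏_es(σ(𝒜)). -/
open CategoryTheory

universe v u v' u'

universe w

/-- The free coproduct cocompletion of a category: objects are small families
of objects of `A`. -/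
structure Fam.{wF, vF, uF} (A : Type uF) [Category.{vF} A] : Type (max uF (wF + 1)) where
  ι : Type wF
  obj : ι → A

instance {A : Type u} [Category.{v} A] : Category.{max w v} (Fam.{w, v, u} A) where
  Hom X Y := Σ f : X.ι → Y.ι, ∀ i, X.obj i ⟶ Y.obj (f i)
  id X := ⟨id, fun i => 𝟙 _⟩
  comp f g := ⟨g.1 ∘ f.1, fun i => f.2 i ≫ g.2 (f.1 i)⟩
  id_comp f := by
    rcases f with ⟨f1, f2⟩
    exact Sigma.ext rfl (heq_of_eq (funext fun i => Category.id_comp (f2 i)))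
  comp_id f := by
    rcases f with ⟨f1, f2⟩
    exact Sigma.ext rfl (heq_of_eq (funext fun i => Category.comp_id (f2 i)))
  assoc f g h := by
    rcases f with ⟨f1, f2⟩
    rcases g with ⟨g1, g2⟩
    rcases h with ⟨h1, h2⟩
    exact Sigma.ext rfl (heq_of_eq (funext fun i => Category.assoc _ _ _))

/-- A lower class is essentially small if it is the down-closure of a small
(`Type w`-indexed) set. -/
def IsEssentiallySmallLowerSet.{wE, uE} {α : Type uE} [Preorder α] (L : LowerSet α) : Prop :=
  ∃ (ι : Type wE) (f : ι → α), L = lowerClosure (Set.range f)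

section Aux

variable {A : Type u} [Category.{v} A]

/-- The lower set associated to a family. -/
def famLS (X : Fam.{w, v, u} A) : LowerSet (SCC A) :=
  lowerClosure (Set.range fun i => SCC.mk (X.obj i))

lemma scc_mk_le_iff {a b : A} : SCC.mk a ≤ SCC.mk b ↔ Nonempty (a ⟶ b) := Iff.rfl

lemma hom_iff_famLS_le (X Y : Fam.{w, v, u} A) :
    Nonempty (X ⟶ Y) ↔ famLS X ≤ famLS Y := by
  constructor
  · rintro ⟨f⟩
    refine (lowerClosure_min ?_ (lowerClosure _).lower')
    rintro _ ⟨i, rfl⟩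
    exact (lowerClosure _).lower (scc_mk_le_iff.2 ⟨f.2 i⟩)
      (subset_lowerClosure ⟨f.1 i, rfl⟩)
  · intro h
    have h' : ∀ i, ∃ j, Nonempty (X.obj i ⟶ Y.obj j) := by
      intro i
      have := h (subset_lowerClosure (Set.mem_range_self i))
      obtain ⟨_, ⟨j, rfl⟩, hle⟩ := this
      exact ⟨j, scc_mk_le_iff.1 hle⟩
    exact ⟨⟨fun i => (h' i).choose, fun i => (h' i).choose_spec.some⟩⟩

/-- The descended map on strongly connected components. -/
noncomputable def famPhi :
    SCC (Fam.{w, v, u} A) → { L : LowerSet (SCC A) // IsEssentiallySmallLowerSet.{w, u} L } :=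
  Quotient.lift (fun X => ⟨famLS X, X.ι, fun i => SCC.mk (X.obj i), rfl⟩)
    (by
      rintro X Y ⟨h₁, h₂⟩
      exact Subtype.ext (le_antisymm ((hom_iff_famLS_le X Y).1 h₁)
        ((hom_iff_famLS_le Y X).1 h₂)))

lemma famPhi_le_iff {x y : SCC (Fam.{w, v, u} A)} :
    famPhi x ≤ famPhi y ↔ x ≤ y := by
  induction x using Quotient.ind
  induction y using Quotient.ind
  exact (hom_iff_famLS_le _ _).symm

lemma famPhi_bijective :
    Function.Bijective (famPhi : SCC (Fam.{w, v, u} A) → _) := by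
  constructor
  · intro x y h
    exact le_antisymm (famPhi_le_iff.1 h.le) (famPhi_le_iff.1 h.ge)
  · rintro ⟨L, ι, f, rfl⟩
    refine ⟨Quotient.mk _ ⟨ι, fun i => (f i).out⟩, ?_⟩
    refine Subtype.ext ?_
    show famLS _ = _
    unfold famLS
    congr 1
    ext x
    constructor
    · rintro ⟨i, rfl⟩; exact ⟨i, (Quotient.out_eq (f i)).symm ▸ rfl⟩
    · rintro ⟨i, rfl⟩
      exact ⟨i, Quotient.out_eq (f i)⟩

end Aux

/-- `σ(Fam(𝒜))` is isomorphic to the poset of essentially small lower classes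
of `σ(𝒜)`, ordered by inclusion. -/
theorem scc_fam_orderIso (A : Type u) [Category.{v} A] :
    Nonempty (SCC (Fam.{w, v, u} A) ≃o
      { L : LowerSet (SCC A) // IsEssentiallySmallLowerSet.{w, u} L }) := by
  exact ⟨⟨Equiv.ofBijective _ famPhi_bijective, famPhi_le_iff⟩⟩
end

section
/- Let ℤ be the discrete group of integers. The poset of strongly connected components of the category ℤ-Set of ℤ-actions is isomorphic to the poset of lower sets of the poset Sub(ℤ) of subgroups of ℤ ordered by inclusion; moreover ℤ-Set fails the ascending chain condition, because the lower set of Sub(ℤ) generated by {pℤ : p prime} is not finitely generated. -/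
open CategoryTheory

universe v u v' u'

/-- The category of `ℤ`-actions on sets: functors from the one-object
category on the (multiplicative) group `ℤ` to `Set`. -/
abbrev ZSet : Type 1 := SingleObj (Multiplicative ℤ) ⥤ Type

/-!
An equivariant map `X → Y` of `G`-sets exists iff every stabilizer of `X` is contained in some
stabilizer of `Y`: on the orbit of `x` the map is forced to be `g • x ↦ g • y`, which is
well defined exactly when `Stab x ≤ Stab y`. Hence the strongly connected component of a `G`-set
is determined by the lower set of subgroups generated by its stabilizers. When `G` is abelian,
every stabilizer of `G ⧸ H` equals `H`, so a lower set `S` is realised by `Σ H ∈ S, G ⧸ H`.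

The subgroups `pℤ`, `p` prime, form an infinite antichain. The lower closure of an infinite
antichain is generated by no finite set, and the lower closures of its finite initial segments
form a strictly increasing chain.
-/

open CategoryTheory MulAction

namespace CategoryTheory.SCC

variable {C : Type u} [Category.{v} C] {α : Type*} [PartialOrder α]

noncomputable def orderIsoOfNonemptyHomIff (φ : C → α)
    (hφ : ∀ X Y : C, Nonempty (X ⟶ Y) ↔ φ X ≤ φ Y) (hsurj : Function.Surjective φ) :
    SCC C ≃o α :=
  OrderIso.ofSurjective
    (OrderEmbedding.ofMapLEIff
      (_root_.Quotient.lift φ fun X Y h => le_antisymm ((hφ X Y).1 h.1) ((hφ Y X).1 h.2))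
      (by rintro ⟨X⟩ ⟨Y⟩; exact (hφ X Y).symm))
    (fun a => (hsurj a).imp' SCC.mk fun _ hX => hX)

end CategoryTheory.SCC

namespace MulAction

section Group

variable {G X Y : Type*} [Group G] [MulAction G X] [MulAction G Y]

lemma smul_eq_smul_of_stabilizer_le {x : X} {y : Y}
    (hxy : stabilizer G x ≤ stabilizer G y) {a b : G} (h : a • x = b • x) : a • y = b • y := by
  have hx : b⁻¹ * a ∈ stabilizer G x := by rw [mem_stabilizer_iff, mul_smul, h, inv_smul_smul]
  have hy := hxy hx
  rwa [mem_stabilizer_iff, mul_smul, inv_smul_eq_iff] at hy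

lemma _root_.MulActionHom.stabilizer_le_stabilizer_apply (f : X →[G] Y) (x : X) :
    stabilizer G x ≤ stabilizer G (f x) := fun a ha => by
  rw [mem_stabilizer_iff, ← map_smul, ha]

lemma nonempty_mulActionHom_of_stabilizer_le
    (h : ∀ x : X, ∃ y : Y, stabilizer G x ≤ stabilizer G y) : Nonempty (X →[G] Y) := by
  choose y hy using h
  let r : X → X := fun x => (Quotient.mk (orbitRel G X) x).out
  have hr_smul (a : G) (x : X) : r (a • x) = r x :=
    congrArg Quotient.out (Quotient.sound (mem_orbit x a))
  have hr_mem (x : X) : x ∈ orbit G (r x) :=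
    orbitRel_apply.mp ((orbitRel G X).symm (Quotient.mk_out (s := orbitRel G X) x))
  choose g hg using hr_mem
  replace hg (x : X) : g x • r x = x := hg x
  refine ⟨⟨fun x => g x • y (r x), fun a x => ?_⟩⟩
  have h : g (a • x) • r x = (a * g x) • r x := by
    rw [← hr_smul a x, hg, mul_smul, hr_smul, hg]
  simp only [hr_smul, id, smul_eq_smul_of_stabilizer_le (hy (r x)) h, mul_smul]

lemma stabilizer_sigma_mk {ι : Type*} {Z : ι → Type*} [∀ i, MulAction G (Z i)]
    (i : ι) (z : Z i) : stabilizer G (⟨i, z⟩ : Σ i, Z i) = stabilizer G z := by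
  ext a
  simp [mem_stabilizer_iff, Sigma.smul_mk]

variable (G X) in
def stabilizerLowerSet : LowerSet (Subgroup G) :=
  lowerClosure (Set.range (stabilizer G : X → Subgroup G))

lemma stabilizerLowerSet_le_iff :
    stabilizerLowerSet G X ≤ stabilizerLowerSet G Y ↔
      ∀ x : X, ∃ y : Y, stabilizer G x ≤ stabilizer G y := by
  simp [stabilizerLowerSet, lowerClosure_le, Set.range_subset_iff, mem_lowerClosure]

lemma nonempty_mulActionHom_iff :
    Nonempty (X →[G] Y) ↔ stabilizerLowerSet G X ≤ stabilizerLowerSet G Y :=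
  Iff.trans ⟨fun ⟨f⟩ x => ⟨f x, f.stabilizer_le_stabilizer_apply x⟩,
    nonempty_mulActionHom_of_stabilizer_le⟩ stabilizerLowerSet_le_iff.symm

end Group

section CommGroup

variable {G : Type*} [CommGroup G]

lemma stabilizer_quotient_of_comm (H : Subgroup G) (q : G ⧸ H) : stabilizer G q = H := by
  induction q using QuotientGroup.induction_on with | H g => ?_
  ext a
  rw [mem_stabilizer_iff, Quotient.smul_mk, QuotientGroup.eq, smul_eq_mul, mul_inv_rev,
    mul_comm g⁻¹, inv_mul_cancel_right, inv_mem_iff]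

lemma stabilizerLowerSet_sigma_quotient (S : LowerSet (Subgroup G)) :
    stabilizerLowerSet G (Σ H : S, G ⧸ (H : Subgroup G)) = S := by
  ext K
  simp only [stabilizerLowerSet, SetLike.mem_coe, mem_lowerClosure, Set.exists_range_iff]
  constructor
  · rintro ⟨⟨H, q⟩, hK⟩
    rw [stabilizer_sigma_mk, stabilizer_quotient_of_comm] at hK
    exact S.lower hK H.2
  · intro hK
    exact ⟨⟨⟨K, hK⟩, 1⟩, by rw [stabilizer_sigma_mk, stabilizer_quotient_of_comm]⟩

end CommGroup

end MulAction

namespace CategoryTheory.SingleObj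

section Monoid

variable {G : Type u} [Monoid G]

def functorOfMulAction (X : Type u) [MulAction G X] : SingleObj G ⥤ Type u where
  obj _ := X
  map g := TypeCat.ofHom (g • ·)
  map_id _ := by ext; exact one_smul G _
  map_comp g h := by ext; exact mul_smul h g _

lemma nonempty_hom_iff_nonempty_mulActionHom {F F' : SingleObj G ⥤ Type u} :
    Nonempty (F ⟶ F') ↔ Nonempty (F.obj (star G) →[G] F'.obj (star G)) := by
  constructor
  · rintro ⟨τ⟩
    exact ⟨⟨τ.app (star G), fun g x => types_congr_hom (τ.naturality g) x⟩⟩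
  · rintro ⟨f⟩
    exact ⟨natTrans (TypeCat.ofHom f) fun g => by ext x; exact f.map_smul g x⟩

end Monoid

noncomputable def sccFunctorOrderIso (G : Type u) [CommGroup G] :
    SCC (SingleObj G ⥤ Type u) ≃o LowerSet (Subgroup G) :=
  SCC.orderIsoOfNonemptyHomIff (fun F => stabilizerLowerSet G (F.obj (star G)))
    (fun _ _ => nonempty_hom_iff_nonempty_mulActionHom.trans nonempty_mulActionHom_iff)
    (fun S => ⟨functorOfMulAction (Σ H : S, G ⧸ (H : Subgroup G)),
      stabilizerLowerSet_sigma_quotient S⟩)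

end CategoryTheory.SingleObj

noncomputable def zSetOrderIso : SCC ZSet ≃o LowerSet (AddSubgroup ℤ) :=
  (SingleObj.sccFunctorOrderIso (Multiplicative ℤ)).trans
    (LowerSet.map AddSubgroup.toSubgroup.symm)

namespace IsAntichain

variable {α : Type*} [PartialOrder α] {P : Set α}

lemma subset_of_lowerClosure_eq {s : Set α} (hP : IsAntichain (· ≤ ·) P)
    (h : lowerClosure s = lowerClosure P) : P ⊆ s := by
  intro p hp
  obtain ⟨t, ht, hpt⟩ : p ∈ lowerClosure s := h ▸ subset_lowerClosure hp
  obtain ⟨p', hp', htp'⟩ : t ∈ lowerClosure P := h ▸ subset_lowerClosure ht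
  obtain rfl := hP.eq hp hp' (hpt.trans htp')
  rwa [le_antisymm hpt htp']

lemma not_exists_finset_lowerClosure_eq (hP : IsAntichain (· ≤ ·) P) (hinf : P.Infinite) :
    ¬ ∃ s : Finset α, lowerClosure (s : Set α) = lowerClosure P :=
  fun ⟨s, hs⟩ => hinf (s.finite_toSet.subset (hP.subset_of_lowerClosure_eq hs))

lemma exists_strictMono_lowerSet (hP : IsAntichain (· ≤ ·) P) (hinf : P.Infinite) :
    ∃ f : ℕ → LowerSet α, StrictMono f := by
  let e := hinf.natEmbedding P
  refine ⟨fun n => lowerClosure ((fun k => (e k : α)) '' Set.Iio n),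
    strictMono_nat_of_lt_succ fun n => lt_of_le_not_ge
      (lowerClosure_mono (Set.image_mono (Set.Iio_subset_Iio n.le_succ))) fun hle => ?_⟩
  obtain ⟨_, ⟨k, hk, rfl⟩, hnk⟩ := hle (subset_lowerClosure ⟨n, Nat.lt_succ_self n, rfl⟩)
  have hkn := e.injective (Subtype.ext (hP.eq (e n).2 (e k).2 hnk))
  exact (Set.mem_Iio.mp hk).ne' hkn

end IsAntichain

lemma Nat.Prime.zmultiples_le_zmultiples_iff {p q : ℕ} (hp : p.Prime) (hq : q.Prime) :
    AddSubgroup.zmultiples (p : ℤ) ≤ AddSubgroup.zmultiples (q : ℤ) ↔ p = q := by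
  rw [AddSubgroup.zmultiples_le, Int.mem_zmultiples_iff, Int.natCast_dvd_natCast,
    Nat.prime_dvd_prime_iff_eq hq hp, eq_comm]

lemma isAntichain_zmultiples_primes :
    IsAntichain (· ≤ ·)
      {H : AddSubgroup ℤ | ∃ p : ℕ, p.Prime ∧ H = AddSubgroup.zmultiples (p : ℤ)} := by
  rintro _ ⟨p, hp, rfl⟩ _ ⟨q, hq, rfl⟩ hne hle
  exact hne (by rw [(hp.zmultiples_le_zmultiples_iff hq).1 hle])

lemma infinite_zmultiples_primes :
    {H : AddSubgroup ℤ | ∃ p : ℕ, p.Prime ∧ H = AddSubgroup.zmultiples (p : ℤ)}.Infinite := by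
  have hinj : Set.InjOn (fun p : ℕ => AddSubgroup.zmultiples (p : ℤ)) {p | p.Prime} :=
    fun p hp q hq h => (Nat.Prime.zmultiples_le_zmultiples_iff hp hq).1 h.le
  refine (Nat.infinite_setOfPred_prime.image hinj).mono ?_
  rintro _ ⟨p, hp, rfl⟩
  exact ⟨p, hp, rfl⟩

/-- The poset of strongly connected components of `ℤ`-`Set` is isomorphic to
the poset of lower sets of the poset of subgroups of `ℤ`; moreover `ℤ`-`Set`
fails the ascending chain condition, because the lower set generated by
`{pℤ : p prime}` is not finitely generated. -/
theorem scc_zSet :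
    Nonempty (SCC ZSet ≃o LowerSet (AddSubgroup ℤ)) ∧
    (∃ f : ℕ → SCC ZSet, StrictMono f) ∧
    ¬ ∃ s : Finset (AddSubgroup ℤ),
        lowerClosure (s : Set (AddSubgroup ℤ)) =
          lowerClosure {H : AddSubgroup ℤ |
            ∃ p : ℕ, p.Prime ∧ H = AddSubgroup.zmultiples (p : ℤ)} := by
  obtain ⟨f, hf⟩ :=
    isAntichain_zmultiples_primes.exists_strictMono_lowerSet infinite_zmultiples_primes
  exact ⟨⟨zSetOrderIso⟩, ⟨zSetOrderIso.symm ∘ f, zSetOrderIso.symm.strictMono.comp hf⟩,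
    isAntichain_zmultiples_primes.not_exists_finset_lowerClosure_eq infinite_zmultiples_primes⟩
end
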